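/- Let q, ℓ₁, ℓ₂, ℓ₃ ∈ ℂ[x₃,x₄,x₅] with q homogeneous of degree 2 and ℓ₁, ℓ₂, ℓ₃ homogeneous of degree 1, and let g = x₀·q(x₃,x₄,x₅) + x₁²·ℓ₁(x₃,x₄,x₅) − 2x₁x₂·ℓ₂(x₃,x₄,x₅) + x₂²·ℓ₃(x₃,x₄,x₅) ∈ ℂ[x₀,…,x₅] (a cubic fourfold of type γ). Then: (1) a nonzero point p ∈ ℂ⁶ with p₀ = p₁ = p₂ = 0 is a singular point of g if and only if q(p₃,p₄,p₅) = 0, so g is singular along the conic {q = 0} in the plane {x₀ = x₁ = x₂ = 0}; and (2) the point e₀ = (1,0,0,0,0,0) is a singular point of g whose 6×6 Hessian matrix (∂²g/∂xᵢ∂xⱼ(e₀)) has rank equal to the rank of the quadratic form q, hence rank at most 3 (a singularity of corank at least 2). -/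

import Mathlib

open MvPolynomial

/-- The embedding of the variables `x₀, x₁, x₂` of a polynomial ring in three variables
as the variables `x₃, x₄, x₅` of the six-variable polynomial ring. -/
def varShift3 (i : Fin 3) : Fin 6 := ⟨i.1 + 3, by omega⟩

/-- The normal form of a cubic fourfold of type γ:
`x₀·q(x₃,x₄,x₅) + x₁²·ℓ₁(x₃,x₄,x₅) − 2x₁x₂·ℓ₂(x₃,x₄,x₅) + x₂²·ℓ₃(x₃,x₄,x₅)`. -/
noncomputable def typeGamma (q l₁ l₂ l₃ : MvPolynomial (Fin 3) ℂ) :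
    MvPolynomial (Fin 6) ℂ :=
  X 0 * rename varShift3 q + X 1 ^ 2 * rename varShift3 l₁
    - 2 * (X 1 * X 2 * rename varShift3 l₂) + X 2 ^ 2 * rename varShift3 l₃

/-- The 6×6 Hessian matrix of second partial derivatives of `g` evaluated at `p`. -/
noncomputable def hessianAt (g : MvPolynomial (Fin 6) ℂ) (p : Fin 6 → ℂ) :
    Matrix (Fin 6) (Fin 6) ℂ :=
  Matrix.of fun i j => eval p (pderiv i (pderiv j g))

lemma varShift3_inj : Function.Injective varShift3 := by
  intro a b h
  simpa [varShift3, Fin.ext_iff] using h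

lemma pderiv_rename_shift (k : Fin 3) (r : MvPolynomial (Fin 3) ℂ) :
    pderiv (varShift3 k) (rename varShift3 r) = rename varShift3 (pderiv k r) :=
  pderiv_rename varShift3_inj k r

lemma pderiv_rename_lo (i : Fin 6) (hi : i.1 < 3) (r : MvPolynomial (Fin 3) ℂ) :
    pderiv i (rename varShift3 r) = 0 := by
  apply pderiv_eq_zero_of_notMem_vars
  intro h
  obtain ⟨j, -, hj⟩ := mem_vars_rename varShift3 r h
  rw [← hj] at hi
  simp only [varShift3] at hi
  omega

lemma eval_zero_homog {n : ℕ} (hn : n ≠ 0) {p : MvPolynomial (Fin 3) ℂ}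
    (hp : p.IsHomogeneous n) : eval (0 : Fin 3 → ℂ) p = 0 := by
  rw [eval_zero]
  exact hp.coeff_eq_zero (by simpa using Ne.symm hn)

lemma eval_zero_pderiv {n : ℕ} (hn : 2 ≤ n) {p : MvPolynomial (Fin 3) ℂ}
    (hp : p.IsHomogeneous n) (k : Fin 3) :
    eval (0 : Fin 3 → ℂ) (pderiv k p) = 0 := by
  classical
  rw [eval_zero]
  conv_lhs => rw [p.as_sum]
  rw [map_sum, map_sum]
  apply Finset.sum_eq_zero
  intro d hd
  rw [pderiv_monomial, constantCoeff_monomial]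
  split_ifs with h
  · have hdeg : d.degree = n := by
      by_contra hne
      exact mem_support_iff.mp hd (hp.coeff_eq_zero hne)
    have hle : d ≤ Finsupp.single k 1 := tsub_eq_zero_iff_le.mp h
    have hd1 : d.degree ≤ 1 := by
      calc d.degree = ∑ i ∈ d.support, d i := rfl
        _ ≤ ∑ i ∈ d.support, Finsupp.single k 1 i :=
            Finset.sum_le_sum fun i _ => Finsupp.le_def.mp hle i
        _ ≤ 1 := by
            simp only [Finsupp.single_apply]
            rw [Finset.sum_ite_eq d.support k fun _ => 1]
            split_ifs <;> omega
    omega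
  · rfl

/-- An explicit equivalence `Fin 6 ≃ Fin 3 ⊕ Fin 3`. -/
def sp6 : Fin 6 ≃ Fin 3 ⊕ Fin 3 where
  toFun := ![Sum.inl 0, Sum.inl 1, Sum.inl 2, Sum.inr 0, Sum.inr 1, Sum.inr 2]
  invFun := Sum.elim (fun k => ⟨k.1, by omega⟩) (fun k => ⟨k.1 + 3, by omega⟩)
  left_inv := by decide
  right_inv := by decide

set_option maxHeartbeats 3200000 in
/-- For a cubic fourfold `g` of type γ (with `q` quadratic and `ℓ₁, ℓ₂, ℓ₃` linear):
(1) a nonzero point `p` with `p₀ = p₁ = p₂ = 0` is a singular point of `g` if and only if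
`q(p₃,p₄,p₅) = 0`, so `g` is singular along the conic `{q = 0}` in the plane
`{x₀ = x₁ = x₂ = 0}`; and (2) `e₀ = (1,0,0,0,0,0)` is a singular point of `g` whose 6×6
Hessian has rank equal to the rank of the quadratic form `q` (the rank of its matrix of
second derivatives), hence rank at most 3 — a singularity of corank at least 2. -/
theorem typeGamma_singularities (q l₁ l₂ l₃ : MvPolynomial (Fin 3) ℂ)
    (hq : q.IsHomogeneous 2) (h₁ : l₁.IsHomogeneous 1) (h₂ : l₂.IsHomogeneous 1)
    (h₃ : l₃.IsHomogeneous 1) :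
    (∀ p : Fin 6 → ℂ, p ≠ 0 → p 0 = 0 → p 1 = 0 → p 2 = 0 →
      ((eval p (typeGamma q l₁ l₂ l₃) = 0 ∧
          ∀ i : Fin 6, eval p (pderiv i (typeGamma q l₁ l₂ l₃)) = 0) ↔
        eval (fun j : Fin 3 => p (varShift3 j)) q = 0)) ∧
    (eval (![1, 0, 0, 0, 0, 0] : Fin 6 → ℂ) (typeGamma q l₁ l₂ l₃) = 0 ∧
      ∀ i : Fin 6,
        eval (![1, 0, 0, 0, 0, 0] : Fin 6 → ℂ) (pderiv i (typeGamma q l₁ l₂ l₃)) = 0) ∧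
    (hessianAt (typeGamma q l₁ l₂ l₃) ![1, 0, 0, 0, 0, 0]).rank =
      (Matrix.of fun i j : Fin 3 =>
        eval (0 : Fin 3 → ℂ) (pderiv i (pderiv j q))).rank ∧
    (hessianAt (typeGamma q l₁ l₂ l₃) ![1, 0, 0, 0, 0, 0]).rank ≤ 3 := by
  have hC2 : ∀ i : Fin 6, pderiv i (2 : MvPolynomial (Fin 6) ℂ) = 0 := fun i => by
    rw [← map_ofNat (C : ℂ →+* MvPolynomial (Fin 6) ℂ) 2, pderiv_C]
  have hr0 : ∀ r : MvPolynomial (Fin 3) ℂ, pderiv (0 : Fin 6) (rename varShift3 r) = 0 :=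
    fun r => pderiv_rename_lo 0 (by norm_num) r
  have hr1 : ∀ r : MvPolynomial (Fin 3) ℂ, pderiv (1 : Fin 6) (rename varShift3 r) = 0 :=
    fun r => pderiv_rename_lo 1 (by norm_num) r
  have hr2 : ∀ r : MvPolynomial (Fin 3) ℂ, pderiv (2 : Fin 6) (rename varShift3 r) = 0 :=
    fun r => pderiv_rename_lo 2 (by norm_num) r
  have hr3 : ∀ r : MvPolynomial (Fin 3) ℂ,
      pderiv (3 : Fin 6) (rename varShift3 r) = rename varShift3 (pderiv 0 r) :=
    fun r => pderiv_rename_shift 0 r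
  have hr4 : ∀ r : MvPolynomial (Fin 3) ℂ,
      pderiv (4 : Fin 6) (rename varShift3 r) = rename varShift3 (pderiv 1 r) :=
    fun r => pderiv_rename_shift 1 r
  have hr5 : ∀ r : MvPolynomial (Fin 3) ℂ,
      pderiv (5 : Fin 6) (rename varShift3 r) = rename varShift3 (pderiv 2 r) :=
    fun r => pderiv_rename_shift 2 r
  have hD0 : pderiv (0 : Fin 6) (typeGamma q l₁ l₂ l₃) = rename varShift3 q := by
    rw [typeGamma]
    simp [pderiv_mul, pderiv_pow, pderiv_X, Pi.single_apply, hC2, hr0]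
    try ring
  have hD1 : pderiv (1 : Fin 6) (typeGamma q l₁ l₂ l₃) =
      2 * X 1 * rename varShift3 l₁ - 2 * (X 2 * rename varShift3 l₂) := by
    rw [typeGamma]
    simp [pderiv_mul, pderiv_pow, pderiv_X, Pi.single_apply, hC2, hr1]
    try ring
  have hD2 : pderiv (2 : Fin 6) (typeGamma q l₁ l₂ l₃) =
      2 * X 2 * rename varShift3 l₃ - 2 * (X 1 * rename varShift3 l₂) := by
    rw [typeGamma]
    simp [pderiv_mul, pderiv_pow, pderiv_X, Pi.single_apply, hC2, hr2]
    try ring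
  have hD3 : pderiv (3 : Fin 6) (typeGamma q l₁ l₂ l₃) =
      X 0 * rename varShift3 (pderiv 0 q) + X 1 ^ 2 * rename varShift3 (pderiv 0 l₁)
        - 2 * (X 1 * X 2 * rename varShift3 (pderiv 0 l₂))
        + X 2 ^ 2 * rename varShift3 (pderiv 0 l₃) := by
    rw [typeGamma]
    simp [pderiv_mul, pderiv_pow, pderiv_X, Pi.single_apply, hC2, hr3]
    try ring
  have hD4 : pderiv (4 : Fin 6) (typeGamma q l₁ l₂ l₃) =
      X 0 * rename varShift3 (pderiv 1 q) + X 1 ^ 2 * rename varShift3 (pderiv 1 l₁)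
        - 2 * (X 1 * X 2 * rename varShift3 (pderiv 1 l₂))
        + X 2 ^ 2 * rename varShift3 (pderiv 1 l₃) := by
    rw [typeGamma]
    simp [pderiv_mul, pderiv_pow, pderiv_X, Pi.single_apply, hC2, hr4]
    try ring
  have hD5 : pderiv (5 : Fin 6) (typeGamma q l₁ l₂ l₃) =
      X 0 * rename varShift3 (pderiv 2 q) + X 1 ^ 2 * rename varShift3 (pderiv 2 l₁)
        - 2 * (X 1 * X 2 * rename varShift3 (pderiv 2 l₂))
        + X 2 ^ 2 * rename varShift3 (pderiv 2 l₃) := by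
    rw [typeGamma]
    simp [pderiv_mul, pderiv_pow, pderiv_X, Pi.single_apply, hC2, hr5]
    try ring
  have hEs : ∀ j : Fin 3, (![1, 0, 0, 0, 0, 0] : Fin 6 → ℂ) (varShift3 j) = 0 := by
    intro j; fin_cases j <;> rfl
  have hevr : ∀ r : MvPolynomial (Fin 3) ℂ,
      eval (![1, 0, 0, 0, 0, 0] : Fin 6 → ℂ) (rename varShift3 r) = eval (0 : Fin 3 → ℂ) r := by
    intro r
    rw [eval_rename, show (![1, 0, 0, 0, 0, 0] : Fin 6 → ℂ) ∘ varShift3 = 0 from funext hEs]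
  have hq0 : eval (0 : Fin 3 → ℂ) q = 0 := eval_zero_homog (by norm_num) hq
  have hl1 : eval (0 : Fin 3 → ℂ) l₁ = 0 := eval_zero_homog one_ne_zero h₁
  have hl2 : eval (0 : Fin 3 → ℂ) l₂ = 0 := eval_zero_homog one_ne_zero h₂
  have hl3 : eval (0 : Fin 3 → ℂ) l₃ = 0 := eval_zero_homog one_ne_zero h₃
  have hdq : ∀ k : Fin 3, eval (0 : Fin 3 → ℂ) (pderiv k q) = 0 :=
    fun k => eval_zero_pderiv le_rfl hq k
  have hq0' : constantCoeff q = 0 := by rwa [eval_zero] at hq0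
  have hl1' : constantCoeff l₁ = 0 := by rwa [eval_zero] at hl1
  have hl2' : constantCoeff l₂ = 0 := by rwa [eval_zero] at hl2
  have hl3' : constantCoeff l₃ = 0 := by rwa [eval_zero] at hl3
  have hdq' : ∀ k : Fin 3, constantCoeff (pderiv k q) = 0 := by
    intro k; have := hdq k; rwa [eval_zero] at this
  have hcase : ∀ i : Fin 6, i = 0 ∨ i = 1 ∨ i = 2 ∨ i = 3 ∨ i = 4 ∨ i = 5 := by decide
  refine ⟨?_, ?_, ?_⟩
  · -- part (1)
    intro p _ hp0 hp1 hp2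
    constructor
    · rintro ⟨-, hsing⟩
      have h := hsing 0
      rw [hD0, eval_rename] at h
      exact h
    · intro hq0
      constructor
      · rw [typeGamma]
        simp [hp0, hp1, hp2]
      · intro i
        rcases hcase i with rfl | rfl | rfl | rfl | rfl | rfl
        · rw [hD0, eval_rename]; exact hq0
        · rw [hD1]; simp [hp1, hp2]
        · rw [hD2]; simp [hp1, hp2]
        · rw [hD3]; simp [hp0, hp1, hp2]
        · rw [hD4]; simp [hp0, hp1, hp2]
        · rw [hD5]; simp [hp0, hp1, hp2]
  · -- part (2)
    constructor
    · rw [typeGamma]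
      simp [hevr, hq0, hl1, hl2, hl3, hq0', hl1', hl2', hl3']
    · intro i
      rcases hcase i with rfl | rfl | rfl | rfl | rfl | rfl
      · rw [hD0, hevr]; exact hq0
      · rw [hD1]; simp [hevr, hl1', hl2']
      · rw [hD2]; simp [hevr, hl2', hl3']
      · rw [hD3]; simp [hevr, hdq']
      · rw [hD4]; simp [hevr, hdq']
      · rw [hD5]; simp [hevr, hdq']
  · -- part (3)
    set Bq : Matrix (Fin 3) (Fin 3) ℂ :=
      Matrix.of fun i j : Fin 3 => eval (0 : Fin 3 → ℂ) (pderiv i (pderiv j q)) with hBq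
    have hsp0 : sp6 (0 : Fin 6) = Sum.inl 0 := rfl
    have hsp1 : sp6 (1 : Fin 6) = Sum.inl 1 := rfl
    have hsp2 : sp6 (2 : Fin 6) = Sum.inl 2 := rfl
    have hsp3 : sp6 (3 : Fin 6) = Sum.inr 0 := rfl
    have hsp4 : sp6 (4 : Fin 6) = Sum.inr 1 := rfl
    have hsp5 : sp6 (5 : Fin 6) = Sum.inr 2 := rfl
    have hHM : hessianAt (typeGamma q l₁ l₂ l₃) ![1, 0, 0, 0, 0, 0]
        = (Matrix.fromBlocks 0 0 0 Bq).submatrix sp6 sp6 := by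
      ext i j
      rcases hcase i with rfl | rfl | rfl | rfl | rfl | rfl <;>
        rcases hcase j with rfl | rfl | rfl | rfl | rfl | rfl <;>
        simp [hessianAt, Matrix.submatrix_apply, hsp0, hsp1, hsp2, hsp3, hsp4, hsp5,
          hD0, hD1, hD2, hD3, hD4, hD5, pderiv_mul, pderiv_pow, pderiv_X, Pi.single_apply,
          hC2, hr0, hr1, hr2, hr3, hr4, hr5, hevr, hq0', hl1', hl2', hl3', hdq', hBq]
    have hM : (Matrix.fromBlocks 0 0 0 Bq : Matrix (Fin 3 ⊕ Fin 3) (Fin 3 ⊕ Fin 3) ℂ)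
        = Matrix.fromRows (0 : Matrix (Fin 3) (Fin 3) ℂ) (1 : Matrix (Fin 3) (Fin 3) ℂ) * Bq * Matrix.fromCols (0 : Matrix (Fin 3) (Fin 3) ℂ) (1 : Matrix (Fin 3) (Fin 3) ℂ) := by
      rw [Matrix.fromRows_mul, Matrix.fromRows_mul_fromCols]
      simp
    have hQP : Matrix.fromCols (0 : Matrix (Fin 3) (Fin 3) ℂ) (1 : Matrix (Fin 3) (Fin 3) ℂ) *
        Matrix.fromRows (0 : Matrix (Fin 3) (Fin 3) ℂ) (1 : Matrix (Fin 3) (Fin 3) ℂ) = 1 := by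
      rw [Matrix.fromCols_mul_fromRows]
      simp
    have hB2 : Matrix.fromCols (0 : Matrix (Fin 3) (Fin 3) ℂ) (1 : Matrix (Fin 3) (Fin 3) ℂ) *
        (Matrix.fromBlocks 0 0 0 Bq : Matrix (Fin 3 ⊕ Fin 3) (Fin 3 ⊕ Fin 3) ℂ) * Matrix.fromRows (0 : Matrix (Fin 3) (Fin 3) ℂ) (1 : Matrix (Fin 3) (Fin 3) ℂ) = Bq := by
      rw [hM]
      have hassoc : Matrix.fromCols (0 : Matrix (Fin 3) (Fin 3) ℂ) (1 : Matrix (Fin 3) (Fin 3) ℂ) *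
          (Matrix.fromRows (0 : Matrix (Fin 3) (Fin 3) ℂ) (1 : Matrix (Fin 3) (Fin 3) ℂ) * Bq * Matrix.fromCols (0 : Matrix (Fin 3) (Fin 3) ℂ) (1 : Matrix (Fin 3) (Fin 3) ℂ)) * Matrix.fromRows (0 : Matrix (Fin 3) (Fin 3) ℂ) (1 : Matrix (Fin 3) (Fin 3) ℂ)
          = (Matrix.fromCols (0 : Matrix (Fin 3) (Fin 3) ℂ) (1 : Matrix (Fin 3) (Fin 3) ℂ) * Matrix.fromRows (0 : Matrix (Fin 3) (Fin 3) ℂ) (1 : Matrix (Fin 3) (Fin 3) ℂ)) * Bq *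
            (Matrix.fromCols (0 : Matrix (Fin 3) (Fin 3) ℂ) (1 : Matrix (Fin 3) (Fin 3) ℂ) *
              Matrix.fromRows (0 : Matrix (Fin 3) (Fin 3) ℂ) (1 : Matrix (Fin 3) (Fin 3) ℂ)) := by
        simp only [Matrix.mul_assoc]
      rw [hassoc, hQP, Matrix.one_mul, Matrix.mul_one]
    have hrank : (hessianAt (typeGamma q l₁ l₂ l₃) ![1, 0, 0, 0, 0, 0]).rank = Bq.rank := by
      rw [hHM, Matrix.rank_submatrix]
      refine le_antisymm ?_ ?_
      · rw [hM]
        exact le_trans (Matrix.rank_mul_le_left _ _) (Matrix.rank_mul_le_right _ _)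
      · calc Bq.rank = (Matrix.fromCols (0 : Matrix (Fin 3) (Fin 3) ℂ) (1 : Matrix (Fin 3) (Fin 3) ℂ) *
            (Matrix.fromBlocks 0 0 0 Bq : Matrix (Fin 3 ⊕ Fin 3) (Fin 3 ⊕ Fin 3) ℂ) * Matrix.fromRows (0 : Matrix (Fin 3) (Fin 3) ℂ) (1 : Matrix (Fin 3) (Fin 3) ℂ)).rank := by rw [hB2]
          _ ≤ (Matrix.fromBlocks 0 0 0 Bq).rank :=
            le_trans (Matrix.rank_mul_le_left _ _) (Matrix.rank_mul_le_right _ _)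
    refine ⟨hrank, ?_⟩
    rw [hrank]
    exact le_trans Bq.rank_le_card_width (by simp)
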